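/- arXiv:2604.04278 — 4 statements merged into one kernel-verified Lean document; each statement's English description precedes it below -/
import Mathlib

section
/- In the setting of the previous algorithm (pick i ∈ {1,2} uniformly, draw Bernoulli(p_i), stop at first success, output Y = 1 iff success from population 1), let N1 be the number of samples drawn from population 1. Then conditional on Y = 1, N1 has a geometric distribution on {1,2,...} with parameter (p1+p2)/(1+p2); in particular E[N1 | Y=1] = (1+p2)/(p1+p2). -/
/-- `P[N1 = n, Y = 1]` for the RR/LRR inner algorithm: the trajectory consists of `n-1`
failures from population 1 and `m` failures from population 2 (in any order, `m` arbitrary),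
followed by a success from population 1; each population-1 failure has probability
`(1-p1)/2`, each population-2 failure `(1-p2)/2`, and the final success `p1/2`. -/
noncomputable def probN1Y1 (p1 p2 : ℝ) (n : ℕ) : ℝ :=
  ∑' m : ℕ, (Nat.choose (n - 1 + m) m : ℝ) *
    ((1 - p1) / 2) ^ (n - 1) * ((1 - p2) / 2) ^ m * (p1 / 2)

/-!
Summing out the number `m` of population-2 failures with the negative binomial series
`∑ₘ C(n+m, m) rᵐ = (1 - r)^{-(n+1)}` at `r = (1 - p2)/2` gives
`P[N1 = n+1, Y = 1] = (p1/(1+p2)) ((1-p1)/(1+p2))ⁿ`. Dividing by `P[Y = 1] = p1/(p1+p2)`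
leaves the geometric law with parameter `q = (p1+p2)/(1+p2)`, since `1 - q = (1-p1)/(1+p2)`,
and the mean `∑ (n+1)(1-q)ⁿ q = 1/q` is the case `k = 1` of the same series.
-/

lemma tsum_choose_add_mul_pow {r : ℝ} (hr : |r| < 1) (k : ℕ) :
    ∑' m : ℕ, ((k + m).choose m : ℝ) * r ^ m = 1 / (1 - r) ^ (k + 1) := by
  simpa only [add_comm _ k, ← Nat.choose_symm_add] using
    tsum_choose_mul_geometric_of_norm_lt_one k (r := r) hr

lemma tsum_succ_mul_geometric {q : ℝ} (hq : |1 - q| < 1) :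
    ∑' n : ℕ, ((n : ℝ) + 1) * ((1 - q) ^ n * q) = 1 / q := by
  have hq0 : q ≠ 0 := by rintro rfl; norm_num at hq
  have hseries := tsum_choose_mul_geometric_of_norm_lt_one 1 (r := 1 - q) hq
  simp only [Nat.choose_one_right, Nat.cast_add, Nat.cast_one, sub_sub_cancel] at hseries
  simp_rw [← mul_assoc]
  rw [tsum_mul_right, hseries]
  field_simp

lemma probN1Y1_succ {p1 p2 : ℝ} (hp2 : p2 ∈ Set.Ioo (-1 : ℝ) 3) (n : ℕ) :
    probN1Y1 p1 p2 (n + 1) = ((1 - p1) / (1 + p2)) ^ n * (p1 / (1 + p2)) := by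
  obtain ⟨hlo, hhi⟩ := hp2
  have hr : |(1 - p2) / 2| < 1 := by rw [abs_lt]; constructor <;> linarith
  have h1p2 : 1 + p2 ≠ 0 := by linarith
  simp only [probN1Y1, Nat.add_sub_cancel]
  calc ∑' m : ℕ, ((n + m).choose m : ℝ) * ((1 - p1) / 2) ^ n * ((1 - p2) / 2) ^ m * (p1 / 2)
      = (∑' m : ℕ, ((n + m).choose m : ℝ) * ((1 - p2) / 2) ^ m) *
          (((1 - p1) / 2) ^ n * (p1 / 2)) := by
        rw [← tsum_mul_right]; congr 1 with m; ring
    _ = ((1 - p1) / (1 + p2)) ^ n * (p1 / (1 + p2)) := by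
        have hpow : ((1 - p1) / (1 + p2)) ^ n * ((1 + p2) / 2) ^ n = ((1 - p1) / 2) ^ n := by
          rw [← mul_pow]; congr 1; field_simp
        rw [tsum_choose_add_mul_pow hr, show 1 - (1 - p2) / 2 = (1 + p2) / 2 by ring, ← hpow]
        field_simp
        ring

lemma probN1Y1_succ_div_probY1 {p1 p2 : ℝ} (hp1 : p1 ≠ 0) (hp2 : p2 ∈ Set.Ioo (-1 : ℝ) 3)
    (n : ℕ) :
    probN1Y1 p1 p2 (n + 1) / (p1 / (p1 + p2)) =
      (1 - (p1 + p2) / (1 + p2)) ^ n * ((p1 + p2) / (1 + p2)) := by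
  have h1p2 : 1 + p2 ≠ 0 := by linarith [hp2.1]
  rw [probN1Y1_succ hp2, show 1 - (p1 + p2) / (1 + p2) = (1 - p1) / (1 + p2) by field_simp; ring]
  field_simp

/-- Conditional on `Y = 1` (whose probability is `p1/(p1+p2)`), the number `N1` of
population-1 samples is geometric on `{1,2,...}` with parameter `(p1+p2)/(1+p2)`;
in particular `E[N1 | Y = 1] = (1+p2)/(p1+p2)`. -/
theorem stmt2 (p1 p2 : ℝ) (hp1 : p1 ∈ Set.Ioo (0:ℝ) 1) (hp2 : p2 ∈ Set.Ioo (0:ℝ) 1) :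
    (∀ n : ℕ, 1 ≤ n →
      probN1Y1 p1 p2 n / (p1 / (p1 + p2)) =
        (1 - (p1 + p2) / (1 + p2)) ^ (n - 1) * ((p1 + p2) / (1 + p2))) ∧
    (∑' n : ℕ, ((n : ℝ) + 1) * (probN1Y1 p1 p2 (n + 1) / (p1 / (p1 + p2))) =
      (1 + p2) / (p1 + p2)) := by
  obtain ⟨hp1_pos, hp1_lt⟩ := hp1
  obtain ⟨hp2_pos, hp2_lt⟩ := hp2
  have hcond := probN1Y1_succ_div_probY1 hp1_pos.ne' (p2 := p2) ⟨by linarith, by linarith⟩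
  refine ⟨fun n hn => ?_, ?_⟩
  · obtain ⟨k, rfl⟩ := Nat.exists_eq_add_of_le' hn
    exact hcond k
  · have hq : |1 - (p1 + p2) / (1 + p2)| < 1 := by
      have hq_pos : 0 < (p1 + p2) / (1 + p2) := by positivity
      have hq_lt : (p1 + p2) / (1 + p2) < 1 := by rw [div_lt_one (by linarith)]; linarith
      rw [abs_lt]
      constructor <;> linarith
    simp_rw [hcond]
    rw [tsum_succ_mul_geometric hq, one_div_div]
end

section
/- Let r ≥ 2 be an integer, a ∈ {0,1}, p1, p2 ∈ (0,1), p = p1/(p1+p2). Let N' be negative binomial counting Bernoulli(p) trials until r+a successes and N'' (independent of N' given nothing further) negative binomial counting Bernoulli(p) trials until r-a failures. Suppose conditional on (N', N''), a random variable D satisfies E[D | N',N''] = 2(N'' p2 - N' p1)/(p1+p2) + 4a and Var[D | N',N''] = 2(N'+N'')(p1+p2-2 p1 p2)/(p1+p2)^2. Then Var[D] = 2((r+a)/p1 + (r-a)/p2). -/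
/-!
By the law of total variance, `Var D = E[Var(D | N', N'')] + Var(E[D | N', N''])`. The first
term is linear in `E N'` and `E N''`; the second is the variance of an affine combination of the
independent `N'` and `N''`, hence `(2 p1/(p1+p2))² Var N' + (2 p2/(p1+p2))² Var N''`. Substituting
the negative binomial moments, the terms in `p1 p2` cancel.
-/

open MeasureTheory ProbabilityTheory

namespace ProbabilityTheory

variable {Ω : Type*} {m m₀ : MeasurableSpace Ω} {μ : Measure[m₀] Ω} [IsProbabilityMeasure μ]

lemma variance_eq_integral_add_variance_of_condExp {X f v : Ω → ℝ} (hm : m ≤ m₀)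
    (hX : MemLp X 2 μ) (hf : μ[X | m] =ᵐ[μ] f)
    (hv : μ[fun ω => X ω ^ 2 | m] =ᵐ[μ] fun ω => v ω + f ω ^ 2) :
    Var[X; μ] = μ[v] + Var[f; μ] := by
  have hcondVar : Var[X; μ | m] =ᵐ[μ] v := by
    filter_upwards [condVar_ae_eq_condExp_sq_sub_sq_condExp hm hX, hf, hv] with ω hω hfω hvω
    rw [Pi.sub_apply, Pi.pow_apply] at hω
    rw [hω, hfω, show X ^ 2 = fun ω => X ω ^ 2 from rfl, hvω]
    ring
  rw [← integral_condVar_add_variance_condExp hm hX, integral_congr_ae hcondVar,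
    variance_congr hf]

lemma IndepFun.variance_mul_add_mul_add {X Y : Ω → ℝ} (hX : MemLp X 2 μ) (hY : MemLp Y 2 μ)
    (h : X ⟂ᵢ[μ] Y) (a b c : ℝ) :
    Var[fun ω => a * X ω + b * Y ω + c; μ] = a ^ 2 * Var[X; μ] + b ^ 2 * Var[Y; μ] := by
  have haX := hX.const_mul a
  have hbY := hY.const_mul b
  have hind : (fun ω => a * X ω) ⟂ᵢ[μ] (fun ω => b * Y ω) :=
    h.comp (φ := fun x => a * x) (ψ := fun y => b * y) (by fun_prop) (by fun_prop)
  rw [variance_add_const (X := fun ω => a * X ω + b * Y ω) (haX.add hbY).aestronglyMeasurable,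
    hind.variance_fun_add haX hbY, variance_const_mul, variance_const_mul]

end ProbabilityTheory

theorem stmt12_general {Ω : Type*} [m0 : MeasurableSpace Ω] (μ : Measure Ω) [IsProbabilityMeasure μ]
    (r : ℕ) (a : ℝ)
    (p1 p2 : ℝ) (hp1 : p1 ∈ Set.Ioo (0:ℝ) 1) (hp2 : p2 ∈ Set.Ioo (0:ℝ) 1)
    (N' N'' D : Ω → ℝ)
    (hN' : MemLp N' 2 μ) (hN'' : MemLp N'' 2 μ) (hD : MemLp D 2 μ)
    (hEN' : μ[N'] = ((r : ℝ) + a) * (p1 + p2) / p1)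
    (hVN' : variance N' μ =
      ((r : ℝ) + a) * (1 - p1 / (p1 + p2)) / (p1 / (p1 + p2)) ^ 2)
    (hEN'' : μ[N''] = ((r : ℝ) - a) * (p1 + p2) / p2)
    (hVN'' : variance N'' μ =
      ((r : ℝ) - a) * (p1 / (p1 + p2)) / (1 - p1 / (p1 + p2)) ^ 2)
    (hind : IndepFun N' N'' μ)
    (hm : MeasurableSpace.comap (fun ω => (N' ω, N'' ω)) inferInstance ≤ m0)
    (hED : μ[D | MeasurableSpace.comap (fun ω => (N' ω, N'' ω)) inferInstance]
        =ᵐ[μ] fun ω => 2 * (N'' ω * p2 - N' ω * p1) / (p1 + p2) + 4 * a)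
    (hVD : μ[(fun ω => (D ω) ^ 2) |
          MeasurableSpace.comap (fun ω => (N' ω, N'' ω)) inferInstance]
        =ᵐ[μ] fun ω =>
          2 * (N' ω + N'' ω) * (p1 + p2 - 2 * p1 * p2) / (p1 + p2) ^ 2 +
            (2 * (N'' ω * p2 - N' ω * p1) / (p1 + p2) + 4 * a) ^ 2) :
    variance D μ = 2 * (((r : ℝ) + a) / p1 + ((r : ℝ) - a) / p2) := by
  have hs : p1 + p2 ≠ 0 := (add_pos hp1.1 hp2.1).ne'
  have hp1 : p1 ≠ 0 := hp1.1.ne'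
  have hp2 : p2 ≠ 0 := hp2.1.ne'
  have hmean : μ[fun ω => 2 * (N' ω + N'' ω) * (p1 + p2 - 2 * p1 * p2) / (p1 + p2) ^ 2] =
      2 * (μ[N'] + μ[N'']) * (p1 + p2 - 2 * p1 * p2) / (p1 + p2) ^ 2 := by
    rw [integral_div, integral_mul_const, integral_const_mul,
      integral_add (hN'.integrable one_le_two) (hN''.integrable one_le_two)]
  have hlin : (fun ω => 2 * (N'' ω * p2 - N' ω * p1) / (p1 + p2) + 4 * a) =
      fun ω => -(2 * p1 / (p1 + p2)) * N' ω + 2 * p2 / (p1 + p2) * N'' ω + 4 * a := by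
    funext ω
    ring
  rw [variance_eq_integral_add_variance_of_condExp hm hD hED hVD, hmean, hlin,
    hind.variance_mul_add_mul_add hN' hN'', hEN', hEN'', hVN', hVN'', one_sub_div hs,
    add_sub_cancel_left]
  field_simp
  ring

/-- Law-of-total-variance computation for the difference `D = N1 - N2` of the numbers of
samples taken from the two populations.  Here `N'` and `N''` are the (independent) negative
binomial sample counts of the two IBS processes run on the Bernoulli(`p`) sequence,
`p = p1/(p1+p2)`, with the stated means and variances, and `D` has the stated conditional
mean and conditional variance given `(N', N'')`.  Then
`Var[D] = 2((r+a)/p1 + (r-a)/p2)`. -/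
theorem stmt12 {Ω : Type*} [m0 : MeasurableSpace Ω] (μ : Measure Ω) [IsProbabilityMeasure μ]
    (r : ℕ) (hr : 2 ≤ r) (a : ℝ) (ha : a = 0 ∨ a = 1)
    (p1 p2 : ℝ) (hp1 : p1 ∈ Set.Ioo (0:ℝ) 1) (hp2 : p2 ∈ Set.Ioo (0:ℝ) 1)
    (N' N'' D : Ω → ℝ)
    (hN' : MemLp N' 2 μ) (hN'' : MemLp N'' 2 μ) (hD : MemLp D 2 μ)
    (hEN' : μ[N'] = ((r : ℝ) + a) * (p1 + p2) / p1)
    (hVN' : variance N' μ =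
      ((r : ℝ) + a) * (1 - p1 / (p1 + p2)) / (p1 / (p1 + p2)) ^ 2)
    (hEN'' : μ[N''] = ((r : ℝ) - a) * (p1 + p2) / p2)
    (hVN'' : variance N'' μ =
      ((r : ℝ) - a) * (p1 / (p1 + p2)) / (1 - p1 / (p1 + p2)) ^ 2)
    (hind : IndepFun N' N'' μ)
    (hm : MeasurableSpace.comap (fun ω => (N' ω, N'' ω)) inferInstance ≤ m0)
    (hED : μ[D | MeasurableSpace.comap (fun ω => (N' ω, N'' ω)) inferInstance]
        =ᵐ[μ] fun ω => 2 * (N'' ω * p2 - N' ω * p1) / (p1 + p2) + 4 * a)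
    (hVD : μ[(fun ω => (D ω) ^ 2) |
          MeasurableSpace.comap (fun ω => (N' ω, N'' ω)) inferInstance]
        =ᵐ[μ] fun ω =>
          2 * (N' ω + N'' ω) * (p1 + p2 - 2 * p1 * p2) / (p1 + p2) ^ 2 +
            (2 * (N'' ω * p2 - N' ω * p1) / (p1 + p2) + 4 * a) ^ 2) :
    variance D μ = 2 * (((r : ℝ) + a) / p1 + ((r : ℝ) - a) / p2) :=
  stmt12_general (m0 := m0) μ r a p1 p2 hp1 hp2 N' N'' D hN' hN'' hD hEN' hVN' hEN'' hVN'' hind hm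
    hED hVD
end

section
/- Fix an integer r ≥ 2, a ∈ {0,1}, and ρ ∈ (0,1). Define f(t) = (1/t + t - 2ρ)/((r+a)/t + (r-a)t) for t = sqrt(R) > 0. Then f has a unique minimum on (0,∞) at t = (-a + sqrt(a^2 + ρ^2(r^2 - a^2)))/(ρ(r-a)), and the infimum of f over t ∈ (ρ, 1/ρ) is at least (r - sqrt(a^2 + ρ^2(r^2 - a^2)))/(r^2 - a^2). -/
/-!
Multiplying numerator and denominator by `t`, the ratio becomes
`(1 + t² - 2ρt) / ((r + a) + (r - a)t²)`. With `s² = a² + ρ²(r² - a²)` and `m = (r - s)/(r² - a²)`,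
the difference of this ratio and `m` is a positive multiple of `((s + a)t - ρ(r + a))²`, which vanishes
exactly at `t₀ = ρ(r + a)/(s + a) = (s - a)/(ρ(r - a))`. So `m` is the minimum of the ratio over
`t ≠ 0`, attained only at `t₀`.
-/

open Real

noncomputable section

namespace RiskBound

def ratio (ρ r a t : ℝ) : ℝ := (1 / t + t - 2 * ρ) / ((r + a) / t + (r - a) * t)

def sqrtDisc (ρ r a : ℝ) : ℝ := √(a ^ 2 + ρ ^ 2 * (r ^ 2 - a ^ 2))

/-- The positive root of `ρ(r - a)t² + 2at - ρ(r + a)`, which is, up to a positive factor, the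
numerator of the derivative of `ratio`. -/
def minimizer (ρ r a : ℝ) : ℝ := (-a + sqrtDisc ρ r a) / (ρ * (r - a))

def minValue (ρ r a : ℝ) : ℝ := (r - sqrtDisc ρ r a) / (r ^ 2 - a ^ 2)

variable {ρ r a : ℝ}

theorem ratio_eq_div {t : ℝ} (ht : t ≠ 0) :
    ratio ρ r a t = (1 + t ^ 2 - 2 * ρ * t) / ((r + a) + (r - a) * t ^ 2) := by
  rw [ratio]
  field_simp

theorem sq_sub_sq_pos (ha : |a| < r) : 0 < r ^ 2 - a ^ 2 := by
  nlinarith [abs_nonneg a, sq_abs a]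

theorem sqrtDisc_sq (ha : |a| < r) : sqrtDisc ρ r a ^ 2 = a ^ 2 + ρ ^ 2 * (r ^ 2 - a ^ 2) :=
  sq_sqrt (by nlinarith [sq_sub_sq_pos ha])

theorem abs_lt_sqrtDisc (ha : |a| < r) (hρ : 0 < ρ) : |a| < sqrtDisc ρ r a := by
  rw [sqrtDisc, ← sqrt_sq_eq_abs]
  exact sqrt_lt_sqrt (sq_nonneg a) (by nlinarith [sq_sub_sq_pos ha, pow_pos hρ 2])

theorem sqrtDisc_add_pos (ha : |a| < r) (hρ : 0 < ρ) : 0 < sqrtDisc ρ r a + a := by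
  linarith [abs_lt_sqrtDisc ha hρ, neg_abs_le a]

theorem minimizer_eq (ha : |a| < r) (hρ : 0 < ρ) :
    minimizer ρ r a = ρ * (r + a) / (sqrtDisc ρ r a + a) := by
  have hra : r - a ≠ 0 := by linarith [le_abs_self a]
  rw [minimizer, div_eq_div_iff (mul_ne_zero hρ.ne' hra) (sqrtDisc_add_pos ha hρ).ne']
  linear_combination sqrtDisc_sq (ρ := ρ) ha

theorem minimizer_pos (ha : |a| < r) (hρ : 0 < ρ) : 0 < minimizer ρ r a := by
  rw [minimizer_eq ha hρ]
  exact div_pos (mul_pos hρ (by linarith [neg_abs_le a])) (sqrtDisc_add_pos ha hρ)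

theorem denom_pos (ha : |a| < r) (t : ℝ) : 0 < (r + a) + (r - a) * t ^ 2 :=
  add_pos_of_pos_of_nonneg (by linarith [neg_abs_le a])
    (mul_nonneg (by linarith [le_abs_self a]) (sq_nonneg t))

theorem ratio_sub_minValue (ha : |a| < r) (hρ : 0 < ρ) {t : ℝ} (ht : t ≠ 0) :
    ratio ρ r a t - minValue ρ r a =
      (r - a) * ((sqrtDisc ρ r a + a) * t - ρ * (r + a)) ^ 2 /
        ((sqrtDisc ρ r a + a) * (r ^ 2 - a ^ 2) * ((r + a) + (r - a) * t ^ 2)) := by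
  have hden := denom_pos ha t
  have hs := sqrtDisc_add_pos ha hρ
  have hrr := sq_sub_sq_pos ha
  rw [ratio_eq_div ht, minValue, div_sub_div _ _ hden.ne' hrr.ne',
    div_eq_div_iff (by positivity) (by positivity)]
  linear_combination (r + a) * (r ^ 2 - a ^ 2) * ((r + a) + (r - a) * t ^ 2) * sqrtDisc_sq (ρ := ρ) ha

theorem minValue_le_ratio (ha : |a| < r) (hρ : 0 < ρ) {t : ℝ} (ht : t ≠ 0) :
    minValue ρ r a ≤ ratio ρ r a t := by
  have hra : 0 < r - a := by linarith [le_abs_self a]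
  have hden := mul_pos (mul_pos (sqrtDisc_add_pos ha hρ) (sq_sub_sq_pos ha)) (denom_pos ha t)
  rw [← sub_nonneg, ratio_sub_minValue ha hρ ht]
  exact div_nonneg (mul_nonneg hra.le (sq_nonneg _)) hden.le

theorem minValue_lt_ratio (ha : |a| < r) (hρ : 0 < ρ) {t : ℝ} (ht : t ≠ 0)
    (hne : t ≠ minimizer ρ r a) : minValue ρ r a < ratio ρ r a t := by
  have hra : 0 < r - a := by linarith [le_abs_self a]
  have hs := sqrtDisc_add_pos ha hρ
  have hden := mul_pos (mul_pos hs (sq_sub_sq_pos ha)) (denom_pos ha t)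
  have hX : (sqrtDisc ρ r a + a) * t - ρ * (r + a) ≠ 0 := by
    rw [minimizer_eq ha hρ, ne_eq, eq_div_iff hs.ne'] at hne
    contrapose! hne
    linarith
  rw [← sub_pos, ratio_sub_minValue ha hρ ht]
  exact div_pos (mul_pos hra (sq_pos_of_ne_zero hX)) hden

theorem ratio_minimizer (ha : |a| < r) (hρ : 0 < ρ) :
    ratio ρ r a (minimizer ρ r a) = minValue ρ r a := by
  rw [← sub_eq_zero, ratio_sub_minValue ha hρ (minimizer_pos ha hρ).ne', minimizer_eq ha hρ,
    mul_div_cancel₀ _ (sqrtDisc_add_pos ha hρ).ne', sub_self]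
  simp

end RiskBound

end

open RiskBound in
/-- For fixed `r ≥ 2`, `a ∈ {0,1}`, `ρ ∈ (0,1)`, the function
`f(t) = (1/t + t - 2ρ)/((r+a)/t + (r-a)t)` (with `t = √R`) has a unique minimum on
`(0,∞)` at `t0 = (-a + sqrt(a² + ρ²(r² - a²)))/(ρ(r-a))`, and its infimum over
`t ∈ (ρ, 1/ρ)` is at least `(r - sqrt(a² + ρ²(r² - a²)))/(r² - a²)`. -/
theorem stmt15 (r : ℕ) (hr : 2 ≤ r) (a : ℝ) (ha : a = 0 ∨ a = 1)
    (ρ : ℝ) (hρ : ρ ∈ Set.Ioo (0:ℝ) 1) :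
    (∀ t ∈ Set.Ioi (0:ℝ),
      t ≠ (-a + Real.sqrt (a ^ 2 + ρ ^ 2 * ((r : ℝ) ^ 2 - a ^ 2))) / (ρ * ((r : ℝ) - a)) →
      (1 / ((-a + Real.sqrt (a ^ 2 + ρ ^ 2 * ((r : ℝ) ^ 2 - a ^ 2))) / (ρ * ((r : ℝ) - a)))
          + (-a + Real.sqrt (a ^ 2 + ρ ^ 2 * ((r : ℝ) ^ 2 - a ^ 2))) / (ρ * ((r : ℝ) - a))
          - 2 * ρ) /
        (((r : ℝ) + a) /
            ((-a + Real.sqrt (a ^ 2 + ρ ^ 2 * ((r : ℝ) ^ 2 - a ^ 2))) / (ρ * ((r : ℝ) - a)))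
          + ((r : ℝ) - a) *
            ((-a + Real.sqrt (a ^ 2 + ρ ^ 2 * ((r : ℝ) ^ 2 - a ^ 2))) / (ρ * ((r : ℝ) - a)))) <
      (1 / t + t - 2 * ρ) / (((r : ℝ) + a) / t + ((r : ℝ) - a) * t)) ∧
    (∀ t ∈ Set.Ioo ρ (1 / ρ),
      ((r : ℝ) - Real.sqrt (a ^ 2 + ρ ^ 2 * ((r : ℝ) ^ 2 - a ^ 2))) /
          ((r : ℝ) ^ 2 - a ^ 2) ≤
        (1 / t + t - 2 * ρ) / (((r : ℝ) + a) / t + ((r : ℝ) - a) * t)) := by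
  have har : |a| < r := by
    have : (2 : ℝ) ≤ r := by exact_mod_cast hr
    rcases ha with rfl | rfl <;> norm_num <;> linarith
  refine ⟨fun t ht hne => ?_, fun t ht => minValue_le_ratio har hρ.1 (hρ.1.trans ht.1).ne'⟩
  change ratio ρ r a (minimizer ρ r a) < ratio ρ r a t
  rw [ratio_minimizer har hρ.1]
  exact minValue_lt_ratio har hρ.1 (ne_of_gt ht) hne
end

section
/- Fix an integer r ≥ 2, a ∈ {0,1}, p1, p2 ∈ (0,1), and let q = max(p1, p2). Then (p1(1-p1) + p2(1-p2)) / ((r+a) p2 (1-p1) + (r-a) p1 (1-p2)) ≥ (1-q)/(r+a). -/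
/-!
Clear the denominators and split according to which of `p₁, p₂` is the larger. With `s = r + a`
and `t = r - a`, so that `0 ≤ t ≤ s`, the cleared inequality is a sum of two termwise comparisons,
each of which only uses `0 ≤ pᵢ ≤ 1`, `t ≤ s` and the order of `p₁` and `p₂`.
-/

open Set

section ClearedInequality

variable {s t p₁ p₂ : ℝ}

lemma mul_sq_one_sub_le_of_le (hs : 0 ≤ s) (hts : t ≤ s) (hp₁ : p₁ ≤ p₂) (hp₂ : p₂ ∈ Icc (0 : ℝ) 1) :
    t * (1 - p₂) ^ 2 ≤ s * (1 - p₁) :=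
  calc t * (1 - p₂) ^ 2 ≤ s * (1 - p₂) ^ 2 := by gcongr
    _ ≤ s * (1 - p₂) := by gcongr; nlinarith [hp₂.1, hp₂.2]
    _ ≤ s * (1 - p₁) := by gcongr

lemma mul_one_sub_le (hs : 0 ≤ s) (hts : t ≤ s) (hp : p₂ ∈ Icc (0 : ℝ) 1) :
    t * (1 - p₂) ≤ s :=
  calc t * (1 - p₂) ≤ s * (1 - p₂) := by gcongr; linarith [hp.2]
    _ ≤ s := by nlinarith [hp.1]

lemma one_sub_right_mul_le_of_le (hs : 0 ≤ s) (hts : t ≤ s) (h : p₁ ≤ p₂)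
    (hp₁ : p₁ ∈ Icc (0 : ℝ) 1) (hp₂ : p₂ ∈ Icc (0 : ℝ) 1) :
    (1 - p₂) * (s * p₂ * (1 - p₁) + t * p₁ * (1 - p₂)) ≤ s * (p₁ * (1 - p₁) + p₂ * (1 - p₂)) := by
  have hvar : 0 ≤ s * p₂ * (1 - p₂) := by
    have := hp₂.1; have := hp₂.2; positivity
  have key := mul_sq_one_sub_le_of_le hs hts h hp₂
  nlinarith [mul_le_mul_of_nonneg_left hp₁.1 hvar, mul_le_mul_of_nonneg_left key hp₁.1]

lemma one_sub_left_mul_le_of_le (hs : 0 ≤ s) (hts : t ≤ s) (h : p₂ ≤ p₁)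
    (hp₁ : p₁ ∈ Icc (0 : ℝ) 1) (hp₂ : p₂ ∈ Icc (0 : ℝ) 1) :
    (1 - p₁) * (s * p₂ * (1 - p₁) + t * p₁ * (1 - p₂)) ≤ s * (p₁ * (1 - p₁) + p₂ * (1 - p₂)) := by
  have hsq : (1 - p₁) ^ 2 ≤ 1 - p₂ := by nlinarith [hp₁.1, hp₁.2]
  have hvar : 0 ≤ p₁ * (1 - p₁) := by
    have := hp₁.1; have := hp₁.2; positivity
  have key := mul_one_sub_le hs hts hp₂
  nlinarith [mul_le_mul_of_nonneg_left hsq (mul_nonneg hs hp₂.1),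
    mul_le_mul_of_nonneg_left key hvar]

lemma one_sub_max_mul_le (hs : 0 ≤ s) (hts : t ≤ s)
    (hp₁ : p₁ ∈ Icc (0 : ℝ) 1) (hp₂ : p₂ ∈ Icc (0 : ℝ) 1) :
    (1 - max p₁ p₂) * (s * p₂ * (1 - p₁) + t * p₁ * (1 - p₂)) ≤
      s * (p₁ * (1 - p₁) + p₂ * (1 - p₂)) := by
  rcases le_total p₁ p₂ with h | h
  · rw [max_eq_right h]; exact one_sub_right_mul_le_of_le hs hts h hp₁ hp₂
  · rw [max_eq_left h]; exact one_sub_left_mul_le_of_le hs hts h hp₁ hp₂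

end ClearedInequality

/-- Key inequality for the OR/LOR efficiency bound: with `q = max(p1,p2)`,
`(p1(1-p1) + p2(1-p2)) / ((r+a)p2(1-p1) + (r-a)p1(1-p2)) ≥ (1-q)/(r+a)`. -/
theorem stmt18 (r : ℕ) (hr : 2 ≤ r) (a : ℝ) (ha : a = 0 ∨ a = 1)
    (p1 p2 : ℝ) (hp1 : p1 ∈ Set.Ioo (0:ℝ) 1) (hp2 : p2 ∈ Set.Ioo (0:ℝ) 1) :
    (1 - max p1 p2) / ((r : ℝ) + a) ≤
      (p1 * (1 - p1) + p2 * (1 - p2)) /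
        (((r : ℝ) + a) * p2 * (1 - p1) + ((r : ℝ) - a) * p1 * (1 - p2)) := by
  have hr' : (2 : ℝ) ≤ r := by exact_mod_cast hr
  have ha' : 0 ≤ a ∧ a ≤ 1 := by rcases ha with rfl | rfl <;> norm_num
  have hs : 0 < (r : ℝ) + a := by linarith
  have ht : 0 ≤ (r : ℝ) - a := by linarith
  obtain ⟨hp1₀, hp1₁⟩ := hp1
  obtain ⟨hp2₀, hp2₁⟩ := hp2
  have hD : 0 < ((r : ℝ) + a) * p2 * (1 - p1) + ((r : ℝ) - a) * p1 * (1 - p2) := by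
    have : 0 < 1 - p1 := by linarith
    have : 0 < 1 - p2 := by linarith
    positivity
  rw [div_le_div_iff₀ hs hD, mul_comm _ ((r : ℝ) + a)]
  exact one_sub_max_mul_le hs.le (by linarith) ⟨hp1₀.le, hp1₁.le⟩ ⟨hp2₀.le, hp2₁.le⟩
end
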